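/- Let (Λ, d) be a k-graph and v a vertex such that Λ¹v and vΛ¹ are both complete edges. If a path η in the 1-skeleton passes through v, then every path ν ∼ η also passes through v; moreover, the number of edges of ν with source v equals the number of edges of η with source v. -/

import Mathlib

open scoped Classical

/-- A `k`-colored directed graph: vertices, edges, range, source, and a color
(degree) in `Fin k` for each edge. -/
structure ColoredGraph (k : ℕ) where
  V : Type
  E : Type
  src : E → V
  rng : E → V
  color : E → Fin k

namespace ColoredGraph

variable {k : ℕ}

/-- A list of edges (listed from the source end) is composable starting at `v`. -/
def Composable (G : ColoredGraph k) : G.V → List G.E → Prop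
  | _, [] => True
  | v, e :: l => G.src e = v ∧ Composable G (G.rng e) l

/-- The final vertex reached by following a list of edges starting at `v`. -/
def endV (G : ColoredGraph k) : G.V → List G.E → G.V
  | v, [] => v
  | _, e :: l => endV G (G.rng e) l

/-- A finite path in `G` : an element of the path category `G*`.  The edges are
listed starting from the source (so the first edge of the list is the first,
innermost, edge of the path). -/
structure GPath (G : ColoredGraph k) where
  src : G.V
  edges : List G.E
  comp : G.Composable src edges

namespace GPath

variable {G : ColoredGraph k}

/-- The range of a path. -/
def rng (p : GPath G) : G.V := G.endV p.src p.edges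

/-- The color order of a path: the list of colors of its edges, starting from
the source end. -/
def colors (p : GPath G) : List (Fin k) := p.edges.map G.color

/-- The degree of a path, as an element of `ℕ^k`. -/
def deg (p : GPath G) : Fin k → ℕ := fun i => p.colors.count i

end GPath

theorem composable_append {G : ColoredGraph k} :
    ∀ (l₁ : List G.E) (v : G.V) (l₂ : List G.E),
      G.Composable v l₁ → G.Composable (G.endV v l₁) l₂ → G.Composable v (l₁ ++ l₂) := by
  intro l₁
  induction l₁ with
  | nil => intro v l₂ _ h₂; exact h₂
  | cons e l ih => intro v l₂ h₁ h₂; exact ⟨h₁.1, ih (G.rng e) l₂ h₁.2 h₂⟩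

theorem endV_append {G : ColoredGraph k} :
    ∀ (l₁ : List G.E) (v : G.V) (l₂ : List G.E),
      G.endV v (l₁ ++ l₂) = G.endV (G.endV v l₁) l₂ := by
  intro l₁
  induction l₁ with
  | nil => intro v l₂; rfl
  | cons e l ih => intro v l₂; exact ih (G.rng e) l₂

/-- Concatenation of composable paths. -/
def GPath.append {G : ColoredGraph k} (p q : GPath G) (h : p.rng = q.src) : GPath G :=
  ⟨p.src, p.edges ++ q.edges,
    composable_append p.edges p.src q.edges p.comp
      (by rw [show G.endV p.src p.edges = q.src from h]; exact q.comp)⟩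

/-- The path consisting of a single edge. -/
def edgePath (G : ColoredGraph k) (e : G.E) : GPath G :=
  ⟨G.src e, [e], by exact ⟨rfl, True.intro⟩⟩

/-- The relation preserves range, source and degree. -/
def PreservesRSD (G : ColoredGraph k) (rel : GPath G → GPath G → Prop) : Prop :=
  ∀ p q : GPath G, rel p q → p.src = q.src ∧ p.rng = q.rng ∧ p.deg = q.deg

/-- (KG0): the relation respects concatenation of paths. -/
def KG0 (G : ColoredGraph k) (rel : GPath G → GPath G → Prop) : Prop :=
  ∀ (p₁ p₂ q₁ q₂ : GPath G) (h : p₁.rng = p₂.src) (h' : q₁.rng = q₂.src),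
    rel p₁ q₁ → rel p₂ q₂ → rel (p₁.append p₂ h) (q₁.append q₂ h')

/-- (KG4): for each path and each permutation of its color order there is a
unique equivalent path with the permuted color order. -/
def KG4 (G : ColoredGraph k) (rel : GPath G → GPath G → Prop) : Prop :=
  ∀ (p : GPath G) (c : List (Fin k)), List.Perm c p.colors →
    ∃! q : GPath G, rel q p ∧ q.colors = c

/-- (KG1): distinct edges are inequivalent. -/
def KG1 (G : ColoredGraph k) (rel : GPath G → GPath G → Prop) : Prop :=
  ∀ e f : G.E, rel (edgePath G e) (edgePath G f) ↔ e = f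

/-- (KG2): completeness for bi-colored paths. -/
def KG2 (G : ColoredGraph k) (rel : GPath G → GPath G → Prop) : Prop :=
  ∀ (p : GPath G) (i j : Fin k), p.colors = [i, j] →
    ∃! q : GPath G, rel p q ∧ q.colors = [j, i]

/-- An equivalence relation, together with `KG0` and `KG4`, presents a `k`-graph. -/
def IsKGraphRel (G : ColoredGraph k) (rel : GPath G → GPath G → Prop) : Prop :=
  Equivalence rel ∧ PreservesRSD G rel ∧ KG0 G rel ∧ KG4 G rel

/-- Every vertex receives an edge of every color. -/
def SourceFree (G : ColoredGraph k) : Prop :=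
  ∀ (v : G.V) (i : Fin k), ∃ e : G.E, G.rng e = v ∧ G.color e = i

/-- Every vertex receives finitely many edges of each color. -/
def RowFinite (G : ColoredGraph k) : Prop :=
  ∀ (v : G.V) (i : Fin k), Set.Finite {e : G.E | G.rng e = v ∧ G.color e = i}

/-- `q` is obtained from `p` by replacing the initial (inner) two-edge subpath by
an equivalent two-edge path with transposed colors. -/
def SwapInner (G : ColoredGraph k) (rel : GPath G → GPath G → Prop) (p q : GPath G) : Prop :=
  ∃ (a b w : GPath G) (ha : a.rng = w.src) (hb : b.rng = w.src),
    a.edges.length = 2 ∧ b.colors = a.colors.reverse ∧ rel a b ∧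
    p = a.append w ha ∧ q = b.append w hb

/-- `q` is obtained from `p` by replacing the final (outer) two-edge subpath by
an equivalent two-edge path with transposed colors. -/
def SwapOuter (G : ColoredGraph k) (rel : GPath G → GPath G → Prop) (p q : GPath G) : Prop :=
  ∃ (w a b : GPath G) (ha : w.rng = a.src) (hb : w.rng = b.src),
    a.edges.length = 2 ∧ b.colors = a.colors.reverse ∧ rel a b ∧
    p = w.append a ha ∧ q = w.append b hb

/-- (KG3): associativity. For a tri-colored path with pairwise distinct colors,
the two standard routes of successive pairwise swaps give the same result. -/
def KG3 (G : ColoredGraph k) (rel : GPath G → GPath G → Prop) : Prop :=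
  ∀ (p : GPath G) (i j l : Fin k), i ≠ j → j ≠ l → i ≠ l →
    p.colors = [l, j, i] → ∀ p₁ p₂ p₃ q₁ q₂ q₃ : GPath G,
      SwapOuter G rel p p₁ → SwapInner G rel p₁ p₂ → SwapOuter G rel p₂ p₃ →
      SwapInner G rel p q₁ → SwapOuter G rel q₁ q₂ → SwapInner G rel q₂ q₃ → p₃ = q₃

/-- `w ≤ v` : there is a path from `v` to `w` (source `v`, range `w`). -/
def LeV (G : ColoredGraph k) (v w : G.V) : Prop :=
  ∃ p : GPath G, p.src = v ∧ p.rng = w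

theorem LeV_extend {G : ColoredGraph k} {v : G.V} (e : G.E)
    (h : LeV G v (G.src e)) : LeV G v (G.rng e) := by
  obtain ⟨p, hs, hr⟩ := h
  refine ⟨p.append (edgePath G e) hr, hs, ?_⟩
  show G.endV p.src (p.edges ++ [e]) = G.rng e
  exact (endV_append p.edges p.src [e]).trans rfl

/-- A complete edge from `u` to `w`: exactly one edge of each color, all with
source `u` and range `w`, closed under commuting squares. -/
def IsCompleteEdge (G : ColoredGraph k) (rel : GPath G → GPath G → Prop)
    (E : Set G.E) (u w : G.V) : Prop :=
  (∀ i : Fin k, ∃! e : G.E, e ∈ E ∧ G.color e = i) ∧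
  (∀ e ∈ E, G.src e = u ∧ G.rng e = w) ∧
  (∀ e ∈ E, ∀ a b f' : G.E, ∀ p q : GPath G,
    ((p.edges = [a, e] ∧ q.edges = [b, f']) ∨ (p.edges = [e, a] ∧ q.edges = [f', b])) →
    rel p q → f' ∈ E)

/-- A set `T` of edges of the color of `f` is closed under being opposite to a
member in a commuting square whose other color differs from that of `f`. -/
def SqClosed (G : ColoredGraph k) (rel : GPath G → GPath G → Prop)
    (f : G.E) (T : Set G.E) : Prop :=
  ∀ g ∈ T, ∀ (e a b : G.E) (p q : GPath G),
    G.color a = G.color b → G.color a ≠ G.color f → G.color e = G.color f →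
    ((p.edges = [g, a] ∧ q.edges = [b, e]) ∨ (p.edges = [a, g] ∧ q.edges = [e, b])) →
    rel p q → e ∈ T
section Paths

variable {G : ColoredGraph k}

theorem GPath.ext {p q : GPath G} (hsrc : p.src = q.src) (hedges : p.edges = q.edges) :
    p = q := by
  cases p; cases q; cases hsrc; cases hedges; rfl

@[simp]
theorem GPath.edges_append (p q : GPath G) (h : p.rng = q.src) :
    (p.append q h).edges = p.edges ++ q.edges :=
  rfl

theorem GPath.colors_append (p q : GPath G) (h : p.rng = q.src) :
    (p.append q h).colors = p.colors ++ q.colors :=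
  List.map_append ..

theorem composable_of_append :
    ∀ {v : G.V} {l₁ l₂ : List G.E},
      G.Composable v (l₁ ++ l₂) → G.Composable v l₁ ∧ G.Composable (G.endV v l₁) l₂
  | _, [], _, h => ⟨trivial, h⟩
  | _, _ :: _, _, h =>
    have ih := composable_of_append h.2
    ⟨⟨h.1, ih.1⟩, ih.2⟩

theorem GPath.exists_eq_append (p : GPath G) (n : ℕ) :
    ∃ (p₁ p₂ : GPath G) (h : p₁.rng = p₂.src),
      p₁.colors = p.colors.take n ∧ p₂.colors = p.colors.drop n ∧ p = p₁.append p₂ h := by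
  have hcomp : G.Composable p.src (p.edges.take n ++ p.edges.drop n) := by
    rw [List.take_append_drop]; exact p.comp
  obtain ⟨hc₁, hc₂⟩ := composable_of_append hcomp
  exact ⟨⟨p.src, _, hc₁⟩, ⟨_, _, hc₂⟩, rfl, List.map_take .., List.map_drop ..,
    GPath.ext rfl (List.take_append_drop n p.edges).symm⟩

theorem endV_eq_rng_getLast : ∀ (x : G.V) (l : List G.E) (h : l ≠ []),
    G.endV x l = G.rng (l.getLast h)
  | _, [_], _ => rfl
  | _, e :: f :: l, _ => endV_eq_rng_getLast (G.rng e) (f :: l) (List.cons_ne_nil _ _)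

theorem Composable.exists_src_eq_or_endV_eq :
    ∀ {x : G.V} {l : List G.E}, G.Composable x l →
      ∀ e ∈ l, (∃ f ∈ l, G.src f = G.rng e) ∨ G.endV x l = G.rng e
  | _, [], _, _, he => absurd he List.not_mem_nil
  | _, [g], _, e, he => by
    obtain rfl := List.mem_singleton.1 he
    exact Or.inr rfl
  | _, g :: f :: l, hc, e, he => by
    rcases List.mem_cons.1 he with rfl | he
    · exact Or.inl ⟨f, by simp, hc.2.1⟩
    · rcases Composable.exists_src_eq_or_endV_eq hc.2 e he with ⟨f', hf', h⟩ | h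
      · exact Or.inl ⟨f', List.mem_cons_of_mem _ hf', h⟩
      · exact Or.inr h

end Paths

namespace IsKGraphRel

variable {G : ColoredGraph k} {rel : GPath G → GPath G → Prop}

theorem colors_perm (hK : IsKGraphRel G rel) {p q : GPath G} (h : rel p q) :
    p.colors.Perm q.colors :=
  List.perm_iff_count.2 fun i => congrFun (hK.2.1 p q h).2.2 i

theorem length_eq (hK : IsKGraphRel G rel) {p q : GPath G} (h : rel p q) :
    p.edges.length = q.edges.length := by
  simpa [GPath.colors] using (hK.colors_perm h).length_eq

theorem exists_rel_append (hK : IsKGraphRel G rel) {p₁ p₂ q₁ q₂ : GPath G}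
    (h : p₁.rng = p₂.src) (h₁ : rel q₁ p₁) (h₂ : rel q₂ p₂) :
    ∃ h' : q₁.rng = q₂.src, rel (q₁.append q₂ h') (p₁.append p₂ h) :=
  have h' : q₁.rng = q₂.src := (hK.2.1 _ _ h₁).2.1.trans (h.trans (hK.2.1 _ _ h₂).1.symm)
  ⟨h', hK.2.2.1 _ _ _ _ h' h h₁ h₂⟩

variable (P : G.E → Bool)

/-- Realising a permutation of the colour order by adjacent transpositions: each transposition
replaces a two-edge subpath by the equivalent one given by (KG4), which does not change the
number of edges satisfying `P`. -/
theorem exists_rel_colors_eq_countP_eq (hK : IsKGraphRel G rel)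
    (hP : ∀ p q : GPath G, rel p q → p.edges.length = 2 → p.edges.countP P = q.edges.countP P)
    {c d : List (Fin k)} (hcd : c.Perm d) (p : GPath G) (hp : p.colors = d) :
    ∃ q : GPath G, rel q p ∧ q.colors = c ∧ q.edges.countP P = p.edges.countP P := by
  induction hcd generalizing p with
  | nil => exact ⟨p, hK.1.refl p, hp, rfl⟩
  | @cons x l₁ l₂ _ ih =>
    obtain ⟨p₁, p₂, h, hp₁, hp₂, rfl⟩ := p.exists_eq_append 1
    obtain ⟨q₂, hq₂, hcol, hcount⟩ := ih p₂ (by simp [hp₂, hp])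
    obtain ⟨h', hrel⟩ := hK.exists_rel_append h (hK.1.refl p₁) hq₂
    refine ⟨p₁.append q₂ h', hrel, ?_, ?_⟩
    · simp [GPath.colors_append, hp₁, hp, hcol]
    · simp [List.countP_append, hcount]
  | swap x y l =>
    obtain ⟨p₁, p₂, h, hp₁, hp₂, rfl⟩ := p.exists_eq_append 2
    obtain ⟨q₁, ⟨hq₁, hcol⟩, -⟩ := hK.2.2.2 p₁ [y, x] (by simp [hp₁, hp, List.Perm.swap])
    obtain ⟨h', hrel⟩ := hK.exists_rel_append h hq₁ (hK.1.refl p₂)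
    have hlen : q₁.edges.length = 2 := by simpa [GPath.colors] using congrArg List.length hcol
    refine ⟨q₁.append p₂ h', hrel, ?_, ?_⟩
    · simp [GPath.colors_append, hcol, hp₂, hp]
    · simp [List.countP_append, hP q₁ p₁ hq₁ hlen]
  | trans _ _ ih₁ ih₂ =>
    obtain ⟨q, hq, hcol, hcount⟩ := ih₂ p hp
    obtain ⟨r, hr, hcol', hcount'⟩ := ih₁ q hcol
    exact ⟨r, hK.1.trans hr hq, hcol', hcount'.trans hcount⟩

theorem countP_edges_eq (hK : IsKGraphRel G rel)
    (hP : ∀ p q : GPath G, rel p q → p.edges.length = 2 → p.edges.countP P = q.edges.countP P)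
    {p q : GPath G} (h : rel p q) :
    p.edges.countP P = q.edges.countP P := by
  obtain ⟨r, hr, hcol, hcount⟩ :=
    hK.exists_rel_colors_eq_countP_eq P hP (hK.colors_perm h) q rfl
  obtain ⟨_, _, huniq⟩ := hK.2.2.2 q p.colors (hK.colors_perm h)
  rw [(huniq p ⟨h, rfl⟩).trans (huniq r ⟨hr, hcol⟩).symm, hcount]

end IsKGraphRel

theorem countP_src_eq_of_rel_of_length_eq_two {G : ColoredGraph k}
    {rel : GPath G → GPath G → Prop} (hK : IsKGraphRel G rel) {u v : G.V}
    (hin : IsCompleteEdge G rel {e | G.rng e = v} u v) {p q : GPath G} (h : rel p q)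
    (hp : p.edges.length = 2) :
    p.edges.countP (fun e => decide (G.src e = v)) =
      q.edges.countP (fun e => decide (G.src e = v)) := by
  obtain ⟨a, b, hab⟩ := List.length_eq_two.1 hp
  obtain ⟨a', b', hab'⟩ := List.length_eq_two.1 ((hK.length_eq h).symm.trans hp)
  have hpc := p.comp
  have hqc := q.comp
  rw [hab] at hpc
  rw [hab'] at hqc
  have hsrc : G.src a = G.src a' := hpc.1.trans ((hK.2.1 p q h).1.trans hqc.1.symm)
  have hmid : G.rng a = v ↔ G.rng a' = v :=
    ⟨fun ha => hin.2.2 a ha b b' a' p q (Or.inr ⟨hab, hab'⟩) h,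
      fun ha' => hin.2.2 a' ha' b' b a q p (Or.inr ⟨hab', hab⟩) (hK.1.symm h)⟩
  simp [hab, hab', List.countP_cons, hsrc, hpc.2.1, hqc.2.1, hmid]

theorem equivalent_paths_through_vertex_general {k : ℕ} (G : ColoredGraph k)
    (rel : GPath G → GPath G → Prop) (hK : IsKGraphRel G rel)
    (v u : G.V)
    (hin : IsCompleteEdge G rel {e : G.E | G.rng e = v} u v)
    (eta : GPath G) (hpass : ∃ e ∈ eta.edges, G.src e = v ∨ G.rng e = v) :
    ∀ nu : GPath G, rel nu eta →
      (∃ e ∈ nu.edges, G.src e = v ∨ G.rng e = v) ∧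
      nu.edges.countP (fun e => decide (G.src e = v)) =
        eta.edges.countP (fun e => decide (G.src e = v)) := by
  intro nu hrel
  have hcount := hK.countP_edges_eq _
    (fun _ _ => countP_src_eq_of_rel_of_length_eq_two hK hin) hrel
  refine ⟨?_, hcount⟩
  by_cases hsrc : ∃ f ∈ eta.edges, G.src f = v
  · obtain ⟨f, hf, hfv⟩ := hsrc
    have hpos : 0 < nu.edges.countP (fun e => decide (G.src e = v)) :=
      hcount ▸ List.countP_pos_iff.2 ⟨f, hf, decide_eq_true hfv⟩
    obtain ⟨g, hg, hgv⟩ := List.countP_pos_iff.1 hpos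
    exact ⟨g, hg, Or.inl (of_decide_eq_true hgv)⟩
  · -- Without an edge leaving `v`, `eta` can only meet `v` at its end, which `nu` shares.
    obtain ⟨e, he, hev⟩ := hpass
    have hev : G.rng e = v := hev.resolve_left fun h => hsrc ⟨e, he, h⟩
    have heta : eta.rng = v := hev ▸ (eta.comp.exists_src_eq_or_endV_eq e he).resolve_left
      fun ⟨f, hf, h⟩ => hsrc ⟨f, hf, h.trans hev⟩
    have hne : nu.edges ≠ [] := List.ne_nil_of_length_pos
      ((hK.length_eq hrel).trans_gt (List.length_pos_of_mem he))
    refine ⟨_, List.getLast_mem hne, Or.inr ?_⟩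
    rw [← endV_eq_rng_getLast, ← heta]
    exact (hK.2.1 nu eta hrel).2.1

/-- If the incoming and outgoing edge sets of `v` are complete edges, then any
path equivalent to a path passing through `v` also passes through `v`, and
equivalent paths have the same number of edges with source `v`. -/
theorem equivalent_paths_through_vertex {k : ℕ} (G : ColoredGraph k)
    (rel : GPath G → GPath G → Prop) (hK : IsKGraphRel G rel)
    (v w u : G.V)
    (hout : IsCompleteEdge G rel {e : G.E | G.src e = v} v w)
    (hin : IsCompleteEdge G rel {e : G.E | G.rng e = v} u v)
    (eta : GPath G) (hpass : ∃ e ∈ eta.edges, G.src e = v ∨ G.rng e = v) :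
    ∀ nu : GPath G, rel nu eta →
      (∃ e ∈ nu.edges, G.src e = v ∨ G.rng e = v) ∧
      nu.edges.countP (fun e => decide (G.src e = v)) =
        eta.edges.countP (fun e => decide (G.src e = v)) :=
  equivalent_paths_through_vertex_general G rel hK v u hin eta hpass

end ColoredGraph
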